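/- Proposition: The color-blind control is not ideal. Specifically, there exists a game (X, λ_w, p, G, v_q, v_u, ω) and a color-blind-controlled equilibrium (c̄*, d*) of that game that is not a non-discriminatory equilibrium, so property (2) of an ideal control fails for the color-blind control. -/

import Mathlib

/-!
Formalization of the Coate–Loury statistical discrimination model with
machine-learning (contractible) beliefs, following Zhu,
"The Impact of Equal Opportunity on Statistical Discrimination".
-/

open scoped BigOperators
open MeasureTheory

noncomputable section

attribute [local instance] Classical.propDecidable

/-- Group identities `I = {w, b}`. -/
inductive GrpI
  | w
  | b
deriving DecidableEq

instance instFintypeGrpI : Fintype GrpI :=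
  ⟨{GrpI.w, GrpI.b}, fun x => by cases x <;> simp⟩

/-- Classes `Y = {q, u}` (qualified / unqualified). -/
inductive Cls
  | q
  | u
deriving DecidableEq

instance instFintypeCls : Fintype Cls :=
  ⟨{Cls.q, Cls.u}, fun x => by cases x <;> simp⟩

/-- A game `(X, λ_w, p, G, v_q, v_u, ω)` of the Coate–Loury model.  The set of
other features is the finite product `X = X_1 × ⋯ × X_N`, encoded as the pi type
`(j : Fin N) → Xs j`.  The statistical model (Assumption 1) is encoded through a
nonempty subset `Ysub ⊆ {1, …, N}` together with the factorization
`p(x | i, y) = pY(x_𝒴 | y) · pC(x_{-𝒴} | i, x_𝒴)`.  The cost distribution is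
given by an everywhere positive density `g` with `∫ g = 1` and `∫ |c| g(c) dc < ∞`. -/
structure Game (N : ℕ) (Xs : Fin N → Type) [∀ j, Fintype (Xs j)]
    [∀ j, Nonempty (Xs j)] where
  lamw : ℝ
  lamw_pos : 0 < lamw
  lamw_lt_one : lamw < 1
  Ysub : Finset (Fin N)
  Ysub_nonempty : Ysub.Nonempty
  pY : ((j : Ysub) → Xs j.1) → Cls → ℝ
  pC : GrpI → ((j : Fin N) → Xs j) → ℝ
  pY_pos : ∀ xY y, 0 < pY xY y
  pC_pos : ∀ i x, 0 < pC i x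
  pY_sum : ∀ y, ∑ xY, pY xY y = 1
  pC_sum : ∀ (i : GrpI) (xY : (j : Ysub) → Xs j.1),
    ∑ x ∈ Finset.univ.filter
        (fun x : (j : Fin N) → Xs j => (fun j : Ysub => x j.1) = xY),
      pC i x = 1
  g : ℝ → ℝ
  g_pos : ∀ c, 0 < g c
  g_int : Integrable g
  g_norm : (∫ c, g c) = 1
  g_abs_int : Integrable fun c => |c| * g c
  vq : ℝ
  vu : ℝ
  om : ℝ
  vq_pos : 0 < vq
  vu_pos : 0 < vu
  om_pos : 0 < om

section Policies

variable {N : ℕ} {Xs : Fin N → Type}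

/-- A decision policy `d : I × X → [0,1]`. -/
def IsPolicy (d : GrpI → ((j : Fin N) → Xs j) → ℝ) : Prop :=
  ∀ i x, d i x ∈ Set.Icc (0 : ℝ) 1

/-- A decision policy when data is color-blind, `d_cb : X → [0,1]`. -/
def IsCbPolicy (dcb : ((j : Fin N) → Xs j) → ℝ) : Prop :=
  ∀ x, dcb x ∈ Set.Icc (0 : ℝ) 1

/-- `S ⊆ {1, …, N}` has the dependence property for the belief `f`:
`f` depends on `(i, x)` only up to `(i, x_S)`. -/
def DepProp {I : Type} (f : I → ((j : Fin N) → Xs j) → ℝ)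
    (S : Finset (Fin N)) : Prop :=
  ∀ (i : I) (x x' : (j : Fin N) → Xs j), (∀ j ∈ S, x j = x' j) → f i x = f i x'

/-- The minimal subset `Ŷ(f)` with the dependence property. -/
def minDep {I : Type} (f : I → ((j : Fin N) → Xs j) → ℝ) : Finset (Fin N) :=
  Finset.univ.filter fun j => ∀ S : Finset (Fin N), DepProp f S → j ∈ S

variable [∀ j, Fintype (Xs j)]

/-- Full-support probability distributions on `I × X` (the set `Δ°(I × X)`). -/
def FullSupp (μ : GrpI → ((j : Fin N) → Xs j) → ℝ) : Prop :=
  (∀ i x, 0 < μ i x) ∧ ∑ i, ∑ x, μ i x = 1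

/-- Beliefs valued in `(0, 1)`. -/
def OpenBelief (f : GrpI → ((j : Fin N) → Xs j) → ℝ) : Prop :=
  ∀ i x, f i x ∈ Set.Ioo (0 : ℝ) 1

/-- Acceptance rate of group `i`. -/
def AR (i : GrpI) (d μ : GrpI → ((j : Fin N) → Xs j) → ℝ) : ℝ :=
  (∑ x, d i x * μ i x) / ∑ x, μ i x

/-- True positive rate of group `i`. -/
def TP (i : GrpI) (d μ f : GrpI → ((j : Fin N) → Xs j) → ℝ) : ℝ :=
  (∑ x, d i x * μ i x * f i x) / ∑ x, μ i x * f i x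

/-- The equal opportunity control `k(X, μ, f)`. -/
def EOset (μ f : GrpI → ((j : Fin N) → Xs j) → ℝ) :
    Set (GrpI → ((j : Fin N) → Xs j) → ℝ) :=
  {d | IsPolicy d ∧ TP GrpI.w d μ f = TP GrpI.b d μ f}

/-- The color-blind control: all color-blind decision policies. -/
def CBset : Set (GrpI → ((j : Fin N) → Xs j) → ℝ) :=
  {d | IsPolicy d ∧ ∀ x, d GrpI.w x = d GrpI.b x}

/-- The no proxies control: policies depending on `(i,x)` only through `x_{Ŷ(f)}`. -/
def NoProxies (_μ f : GrpI → ((j : Fin N) → Xs j) → ℝ) :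
    Set (GrpI → ((j : Fin N) → Xs j) → ℝ) :=
  {d | IsPolicy d ∧
    ∀ i i' x x', (∀ j ∈ minDep f, x j = x' j) → d i x = d i' x'}

/-- `ℓ²` distance between decision policies. -/
def polDist (d d' : GrpI → ((j : Fin N) → Xs j) → ℝ) : ℝ :=
  Real.sqrt (∑ i, ∑ x, (d i x - d' i x) ^ 2)

/-- `ℓ²` distance between pairs `(μ, f)`. -/
def pairDist (μ f μ' f' : GrpI → ((j : Fin N) → Xs j) → ℝ) : ℝ :=
  Real.sqrt ((∑ i, ∑ x, (μ i x - μ' i x) ^ 2) + ∑ i, ∑ x, (f i x - f' i x) ^ 2)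

/-- `ℓ²` distance between strategy profiles `(c̄, d)`. -/
def profDist (c : GrpI → ℝ) (d : GrpI → ((j : Fin N) → Xs j) → ℝ)
    (c' : GrpI → ℝ) (d' : GrpI → ((j : Fin N) → Xs j) → ℝ) : ℝ :=
  Real.sqrt ((∑ i, (c i - c' i) ^ 2) + ∑ i, ∑ x, (d i x - d' i x) ^ 2)

end Policies

/-- Upper hemicontinuity of a correspondence on a set. -/
def UpperHemicontinuousOn' {α β : Type*} [TopologicalSpace α] [TopologicalSpace β]
    (F : α → Set β) (S : Set α) : Prop :=
  ∀ a ∈ S, ∀ V : Set β, IsOpen V → F a ⊆ V → ∀ᶠ a' in nhdsWithin a S, F a' ⊆ V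

/-- Lower hemicontinuity of a correspondence on a set. -/
def LowerHemicontinuousOn' {α β : Type*} [TopologicalSpace α] [TopologicalSpace β]
    (F : α → Set β) (S : Set α) : Prop :=
  ∀ a ∈ S, ∀ V : Set β, IsOpen V → (F a ∩ V).Nonempty →
    ∀ᶠ a' in nhdsWithin a S, (F a' ∩ V).Nonempty

namespace Game

variable {N : ℕ} {Xs : Fin N → Type} [∀ j, Fintype (Xs j)] [∀ j, Nonempty (Xs j)]
variable (Γ : Game N Xs)

/-- Projection `x ↦ x_𝒴`. -/
def proj (x : (j : Fin N) → Xs j) : (j : Γ.Ysub) → Xs j.1 := fun j => x j.1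

/-- `p(x | i, y) = p(x_𝒴 | y) · p(x_{-𝒴} | i, x_𝒴)`. -/
def p (i : GrpI) (x : (j : Fin N) → Xs j) (y : Cls) : ℝ :=
  Γ.pY (Γ.proj x) y * Γ.pC i x

/-- Group probabilities `λ_w`, `λ_b = 1 - λ_w`. -/
def lam : GrpI → ℝ := fun i =>
  match i with
  | GrpI.w => Γ.lamw
  | GrpI.b => 1 - Γ.lamw

/-- The CDF `G` of the cost distribution. -/
def G (c : ℝ) : ℝ := ∫ t in Set.Iic c, Γ.g t

/-- The likelihood function `l(x) = p(x_𝒴 | q) / p(x_𝒴 | u)`. -/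
def lhd (x : (j : Fin N) → Xs j) : ℝ :=
  Γ.pY (Γ.proj x) Cls.q / Γ.pY (Γ.proj x) Cls.u

/-- The likelihood function on `X_𝒴`. -/
def lhdY (xY : (j : Γ.Ysub) → Xs j.1) : ℝ := Γ.pY xY Cls.q / Γ.pY xY Cls.u

/-- The set of likelihood values `{l_1 < … < l_n}`. -/
def LVset : Set ℝ := Set.range Γ.lhd

/-- The assumption that `1` is not a likelihood value
(equivalently, `WW` is single-peaked). -/
def OneNotLV : Prop := (1 : ℝ) ∉ Γ.LVset

/-- The largest likelihood value `l_n`. -/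
def lmax : ℝ := sSup Γ.LVset

/-- `⌈ℓ⌉`: the smallest likelihood value `≥ ℓ`. -/
def lceil (ℓ : ℝ) : ℝ := sInf {v | v ∈ Γ.LVset ∧ ℓ ≤ v}

/-- `⌈ℓ⌉⁻`: the next smallest likelihood value below `⌈ℓ⌉` (or `l_0 = 0`). -/
def lceilm (ℓ : ℝ) : ℝ := sSup (insert 0 {v | v ∈ Γ.LVset ∧ v < Γ.lceil ℓ})

/-- The smallest likelihood value `> ℓ`. -/
def lnext (ℓ : ℝ) : ℝ := sInf {v | v ∈ Γ.LVset ∧ ℓ < v}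

/-- The true distribution of features `μ_RE` given cost thresholds `c̄`. -/
def muRE (c : GrpI → ℝ) (i : GrpI) (x : (j : Fin N) → Xs j) : ℝ :=
  Γ.lam i * (Γ.G (c i) * Γ.p i x Cls.q + (1 - Γ.G (c i)) * Γ.p i x Cls.u)

/-- The true conditional probability (calibrated belief) `f_RE` given `c̄`. -/
def fRE (c : GrpI → ℝ) (i : GrpI) (x : (j : Fin N) → Xs j) : ℝ :=
  Γ.G (c i) * Γ.p i x Cls.q /
    (Γ.G (c i) * Γ.p i x Cls.q + (1 - Γ.G (c i)) * Γ.p i x Cls.u)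

/-- Utility `U_i(c̄(i), d(i))` of the representative `i`-applicant. -/
def Uapp (i : GrpI) (ci : ℝ) (di : ((j : Fin N) → Xs j) → ℝ) : ℝ :=
  Γ.om * ∑ x, (Γ.G ci * Γ.p i x Cls.q + (1 - Γ.G ci) * Γ.p i x Cls.u) * di x -
    ∫ t in Set.Iic ci, t * Γ.g t

/-- Firm utility `U_F(d, μ, f)`. -/
def UF (d μ f : GrpI → ((j : Fin N) → Xs j) → ℝ) : ℝ :=
  ∑ i, ∑ x, d i x * μ i x * (f i x * Γ.vq - (1 - f i x) * Γ.vu)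

/-- The color-blind true distribution of features `μ_cb,RE`. -/
def mucbRE (c : GrpI → ℝ) (x : (j : Fin N) → Xs j) : ℝ :=
  Γ.muRE c GrpI.w x + Γ.muRE c GrpI.b x

/-- The color-blind true conditional probability `f_cb,RE`. -/
def fcbRE (c : GrpI → ℝ) (x : (j : Fin N) → Xs j) : ℝ :=
  (Γ.muRE c GrpI.w x * Γ.fRE c GrpI.w x + Γ.muRE c GrpI.b x * Γ.fRE c GrpI.b x) /
    Γ.mucbRE c x

/-- Firm utility when data is color-blind. -/
def UFcb (dcb μcb fcb : ((j : Fin N) → Xs j) → ℝ) : ℝ :=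
  ∑ x, dcb x * μcb x * (fcb x * Γ.vq - (1 - fcb x) * Γ.vu)

/-- `d(i | l_m)`: conditional acceptance probability at likelihood value `lv`. -/
def dcond (i : GrpI) (di : ((j : Fin N) → Xs j) → ℝ) (lv : ℝ) : ℝ :=
  (∑ x ∈ Finset.univ.filter (fun x => Γ.lhd x = lv), Γ.p i x Cls.q * di x) /
    ∑ x ∈ Finset.univ.filter (fun x => Γ.lhd x = lv), Γ.p i x Cls.q

/-- The within-group policy `d(i)` is associated with the likelihood mixture `ℓ`. -/
def AssociatedWith (i : GrpI) (di : ((j : Fin N) → Xs j) → ℝ) (ℓ : ℝ) : Prop :=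
  0 ≤ ℓ ∧ ℓ ≤ Γ.lmax ∧
    ∀ lv ∈ Γ.LVset,
      (Γ.lceil ℓ < lv → Γ.dcond i di lv = 1) ∧
      (lv = Γ.lceil ℓ →
        Γ.dcond i di lv = (Γ.lceil ℓ - ℓ) / (Γ.lceil ℓ - Γ.lceilm ℓ)) ∧
      (lv < Γ.lceil ℓ → Γ.dcond i di lv = 0)

/-- A decision policy is fair if both within-group policies are associated with
the same likelihood mixture. -/
def Fair (d : GrpI → ((j : Fin N) → Xs j) → ℝ) : Prop :=
  ∃ ℓ, Γ.AssociatedWith GrpI.w (d GrpI.w) ℓ ∧ Γ.AssociatedWith GrpI.b (d GrpI.b) ℓ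

/-- `WW(l_m) = ω ∑_{x_𝒴 : l(x_𝒴) > l_m} (p(x_𝒴|q) - p(x_𝒴|u))`. -/
def WWval (t : ℝ) : ℝ :=
  Γ.om * ∑ xY ∈ Finset.univ.filter (fun xY => t < Γ.lhdY xY),
    (Γ.pY xY Cls.q - Γ.pY xY Cls.u)

/-- The piecewise-linear function `WW` interpolating the points `(l_m, WW(l_m))`. -/
def WW (ℓ : ℝ) : ℝ :=
  if Γ.lceil ℓ = Γ.lceilm ℓ then Γ.WWval (Γ.lceil ℓ)
  else
    (Γ.WWval (Γ.lceilm ℓ) * (Γ.lceil ℓ - ℓ) +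
        Γ.WWval (Γ.lceil ℓ) * (ℓ - Γ.lceilm ℓ)) /
      (Γ.lceil ℓ - Γ.lceilm ℓ)

/-- `EĒ(l_m)`: the unique cost with `G(EĒ(l_m)) = 1 / ((v_q/v_u) l_m + 1)`. -/
def EEbar (lv : ℝ) : ℝ := sInf {cc | 1 / (Γ.vq / Γ.vu * lv + 1) ≤ Γ.G cc}

/-- The correspondence `EE : [0, l_n] ⇒ ℝ`. -/
def EE (ℓ : ℝ) : Set ℝ :=
  if ℓ = 0 then Set.Ici (Γ.EEbar (Γ.lceil 0))
  else if ℓ = Γ.lmax then Set.Iic (Γ.EEbar Γ.lmax)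
  else if ℓ ∈ Γ.LVset then Set.Icc (Γ.EEbar (Γ.lnext ℓ)) (Γ.EEbar ℓ)
  else {Γ.EEbar (Γ.lceil ℓ)}

/-- Each representative applicant's cost threshold is a best response to `d`. -/
def BestResponds (c : GrpI → ℝ) (d : GrpI → ((j : Fin N) → Xs j) → ℝ) : Prop :=
  ∀ (i : GrpI) (c' : ℝ), Γ.Uapp i c' (d i) ≤ Γ.Uapp i (c i) (d i)

/-- An (un-controlled) equilibrium. -/
def IsEquilibrium (c : GrpI → ℝ) (d : GrpI → ((j : Fin N) → Xs j) → ℝ) : Prop :=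
  IsPolicy d ∧ Γ.BestResponds c d ∧
    ∀ d', IsPolicy d' →
      Γ.UF d' (Γ.muRE c) (Γ.fRE c) ≤ Γ.UF d (Γ.muRE c) (Γ.fRE c)

/-- A `k`-controlled equilibrium, for the control `(μ, f) ↦ K μ f`. -/
def IsControlledEq
    (K : (GrpI → ((j : Fin N) → Xs j) → ℝ) → (GrpI → ((j : Fin N) → Xs j) → ℝ) →
      Set (GrpI → ((j : Fin N) → Xs j) → ℝ))
    (c : GrpI → ℝ) (d : GrpI → ((j : Fin N) → Xs j) → ℝ) : Prop :=
  d ∈ K (Γ.muRE c) (Γ.fRE c) ∧ Γ.BestResponds c d ∧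
    ∀ d' ∈ K (Γ.muRE c) (Γ.fRE c),
      Γ.UF d' (Γ.muRE c) (Γ.fRE c) ≤ Γ.UF d (Γ.muRE c) (Γ.fRE c)

/-- `𝒮_k(μ, f)`: firm-optimal policies under the control `K` at `(μ, f)`. -/
def Smax
    (K : (GrpI → ((j : Fin N) → Xs j) → ℝ) → (GrpI → ((j : Fin N) → Xs j) → ℝ) →
      Set (GrpI → ((j : Fin N) → Xs j) → ℝ))
    (μ f : GrpI → ((j : Fin N) → Xs j) → ℝ) :
    Set (GrpI → ((j : Fin N) → Xs j) → ℝ) :=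
  {d | d ∈ K μ f ∧ ∀ d' ∈ K μ f, Γ.UF d' μ f ≤ Γ.UF d μ f}

/-- A `k`-controlled `ε`-equilibrium. -/
def IsCtrlEpsEq
    (K : (GrpI → ((j : Fin N) → Xs j) → ℝ) → (GrpI → ((j : Fin N) → Xs j) → ℝ) →
      Set (GrpI → ((j : Fin N) → Xs j) → ℝ))
    (ε : ℝ) (c : GrpI → ℝ) (d : GrpI → ((j : Fin N) → Xs j) → ℝ) : Prop :=
  ∃ μ f, FullSupp μ ∧ OpenBelief f ∧
    pairDist μ f (Γ.muRE c) (Γ.fRE c) ≤ ε ∧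
    Γ.BestResponds c d ∧ d ∈ K μ f ∧ ∀ d' ∈ K μ f, Γ.UF d' μ f ≤ Γ.UF d μ f

/-- Best responses of applicants to a color-blind policy. -/
def BestRespondsCb (c : GrpI → ℝ) (dcb : ((j : Fin N) → Xs j) → ℝ) : Prop :=
  ∀ (i : GrpI) (c' : ℝ), Γ.Uapp i c' dcb ≤ Γ.Uapp i (c i) dcb

/-- An equilibrium when data is color-blind (unrestricted control). -/
def IsCbEquilibrium (c : GrpI → ℝ) (dcb : ((j : Fin N) → Xs j) → ℝ) : Prop :=
  IsCbPolicy dcb ∧ Γ.BestRespondsCb c dcb ∧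
    ∀ dcb', IsCbPolicy dcb' →
      Γ.UFcb dcb' (Γ.mucbRE c) (Γ.fcbRE c) ≤ Γ.UFcb dcb (Γ.mucbRE c) (Γ.fcbRE c)

/-- A `k_cb`-controlled equilibrium when data is color-blind. -/
def IsCbControlledEq (K : Set (((j : Fin N) → Xs j) → ℝ)) (c : GrpI → ℝ)
    (dcb : ((j : Fin N) → Xs j) → ℝ) : Prop :=
  dcb ∈ K ∧ Γ.BestRespondsCb c dcb ∧
    ∀ dcb' ∈ K,
      Γ.UFcb dcb' (Γ.mucbRE c) (Γ.fcbRE c) ≤ Γ.UFcb dcb (Γ.mucbRE c) (Γ.fcbRE c)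

end Game

/-- A control when data is color-blind: for each `X` and each
`(μ_cb, f_cb) ∈ Δ°(X) × (0,1)^X` it specifies a nonempty compact set of
color-blind decision policies. -/
structure CbControl : Type 1 where
  sets : ∀ (N : ℕ) (Xs : Fin N → Type) [∀ j, Fintype (Xs j)] [∀ j, Nonempty (Xs j)],
    (((j : Fin N) → Xs j) → ℝ) → (((j : Fin N) → Xs j) → ℝ) →
      Set (((j : Fin N) → Xs j) → ℝ)
  nonempty : ∀ (N : ℕ) (Xs : Fin N → Type) [∀ j, Fintype (Xs j)]
    [∀ j, Nonempty (Xs j)] (μ f : ((j : Fin N) → Xs j) → ℝ),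
    (∀ x, 0 < μ x) → (∑ x, μ x = 1) → (∀ x, f x ∈ Set.Ioo (0 : ℝ) 1) →
    (sets N Xs μ f).Nonempty
  compact : ∀ (N : ℕ) (Xs : Fin N → Type) [∀ j, Fintype (Xs j)]
    [∀ j, Nonempty (Xs j)] (μ f : ((j : Fin N) → Xs j) → ℝ),
    (∀ x, 0 < μ x) → (∑ x, μ x = 1) → (∀ x, f x ∈ Set.Ioo (0 : ℝ) 1) →
    IsCompact (sets N Xs μ f)
  mem_policy : ∀ (N : ℕ) (Xs : Fin N → Type) [∀ j, Fintype (Xs j)]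
    [∀ j, Nonempty (Xs j)] (μ f : ((j : Fin N) → Xs j) → ℝ),
    (∀ x, 0 < μ x) → (∑ x, μ x = 1) → (∀ x, f x ∈ Set.Ioo (0 : ℝ) 1) →
    sets N Xs μ f ⊆ {dcb | IsCbPolicy dcb}


/-!
Two binary features: `x₀` is informative about qualification, while the proxy `x₁` says nothing
about qualification beyond `x₀` but is distributed differently across the groups; among whites it
is correlated with `x₀`, among blacks it is independent of it. The color-blind policy "accept iff
`x₁`" therefore rewards investment by whites (acceptance gap `1/30`, threshold `ω/30 = 10`) and not
by blacks (threshold `0`). At these thresholds most whites and few blacks are qualified, so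
`x₁ = true`, being a sign of a white applicant, is a sign of a qualified one, and the policy is
optimal among color-blind policies. The resulting color-blind-controlled equilibrium is
self-confirming but has different thresholds for the two groups.
-/

open Real Set MeasureTheory Finset

theorem integrable_comp_abs_of_integrableOn_Ioi {f : ℝ → ℝ} (hf : IntegrableOn f (Ioi 0)) :
    Integrable fun x => f |x| := by
  have hIoi : IntegrableOn (fun x => f |x|) (Ioi 0) :=
    hf.congr_fun (fun x hx => by rw [abs_of_pos (mem_Ioi.mp hx)]) measurableSet_Ioi
  have hIic : IntegrableOn (fun x => f |x|) (Iic 0) := by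
    have hneg : MeasurableEmbedding fun x : ℝ => -x := (Homeomorph.neg ℝ).measurableEmbedding
    rw [← Measure.map_neg_eq_self (volume : Measure ℝ), hneg.integrableOn_map_iff]
    simp_rw [Function.comp_def, abs_neg, neg_preimage, neg_Iic, neg_zero]
    exact (integrableOn_Ici_iff_integrableOn_Ioi).mpr hIoi
  simpa [Iic_union_Ioi] using hIic.union hIoi

theorem integrable_exp_neg_abs : Integrable fun x : ℝ => exp (-|x|) :=
  integrable_comp_abs_of_integrableOn_Ioi (f := fun x => exp (-x))
    (by simpa using exp_neg_integrableOn_Ioi 0 one_pos)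

theorem integrable_abs_mul_exp_neg_abs : Integrable fun x : ℝ => |x| * exp (-|x|) := by
  refine integrable_comp_abs_of_integrableOn_Ioi (f := fun x => x * exp (-x)) ?_
  refine (GammaIntegral_convergent two_pos).congr_fun (fun x _ => ?_) measurableSet_Ioi
  norm_num [mul_comm]

def laplacePDF (m t : ℝ) : ℝ := exp (-|t - m|) / 2

theorem laplacePDF_pos (m t : ℝ) : 0 < laplacePDF m t := by
  unfold laplacePDF; positivity

theorem integrable_laplacePDF (m : ℝ) : Integrable (laplacePDF m) :=
  (integrable_exp_neg_abs.comp_sub_right m).div_const 2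

theorem integrable_abs_mul_laplacePDF (m : ℝ) :
    Integrable fun t => |t| * laplacePDF m t := by
  refine Integrable.mono' (((integrable_abs_mul_exp_neg_abs.comp_sub_right m).div_const 2).add
      ((integrable_laplacePDF m).const_mul |m|))
    ((continuous_abs.mul (by unfold laplacePDF; fun_prop)).aestronglyMeasurable)
    (Filter.Eventually.of_forall fun t => ?_)
  have hpdf := (laplacePDF_pos m t).le
  have htri : |t| ≤ |t - m| + |m| := by simpa using abs_add_le (t - m) m
  rw [Real.norm_of_nonneg (mul_nonneg (abs_nonneg t) hpdf)]
  calc |t| * laplacePDF m t ≤ (|t - m| + |m|) * laplacePDF m t :=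
        mul_le_mul_of_nonneg_right htri hpdf
    _ = |t - m| * exp (-|t - m|) / 2 + |m| * laplacePDF m t := by unfold laplacePDF; ring

theorem setIntegral_Iic_laplacePDF {m c : ℝ} (hc : c ≤ m) :
    ∫ t in Iic c, laplacePDF m t = exp (c - m) / 2 := by
  have hEq : EqOn (laplacePDF m) (fun t => exp t * (exp (-m) / 2)) (Iic c) := fun t ht => by
    rw [laplacePDF, abs_of_nonpos (by linarith [mem_Iic.mp ht]), neg_neg, sub_eq_add_neg,
      exp_add]
    ring
  rw [setIntegral_congr_fun measurableSet_Iic hEq, integral_mul_const, integral_exp_Iic,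
    sub_eq_add_neg, exp_add]
  ring

theorem setIntegral_Ioi_laplacePDF {m c : ℝ} (hc : m ≤ c) :
    ∫ t in Ioi c, laplacePDF m t = exp (m - c) / 2 := by
  have hEq : EqOn (laplacePDF m) (fun t => exp (-t) * (exp m / 2)) (Ioi c) := fun t ht => by
    rw [laplacePDF, abs_of_nonneg (by linarith [mem_Ioi.mp ht]), neg_sub, sub_eq_add_neg,
      exp_add]
    ring
  rw [setIntegral_congr_fun measurableSet_Ioi hEq, integral_mul_const, integral_exp_neg_Ioi,
    sub_eq_add_neg, exp_add]
  ring

theorem integral_laplacePDF (m : ℝ) : ∫ t, laplacePDF m t = 1 := by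
  rw [← intervalIntegral.integral_Iic_add_Ioi (integrable_laplacePDF m).integrableOn
    (integrable_laplacePDF m).integrableOn, setIntegral_Iic_laplacePDF le_rfl,
    setIntegral_Ioi_laplacePDF le_rfl]
  norm_num

theorem setIntegral_Iic_laplacePDF_of_le {m c : ℝ} (hc : m ≤ c) :
    ∫ t in Iic c, laplacePDF m t = 1 - exp (m - c) / 2 := by
  rw [← integral_laplacePDF m, ← setIntegral_Ioi_laplacePDF hc,
    ← intervalIntegral.integral_Iic_add_Ioi (integrable_laplacePDF m).integrableOn
      (integrable_laplacePDF m).integrableOn]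
  ring

theorem mul_setIntegral_Iic_sub_setIntegral_Iic_le {g : ℝ → ℝ} (hg0 : ∀ t, 0 ≤ g t)
    (hg : Integrable g) (htg : Integrable fun t => t * g t) (s c : ℝ) :
    s * (∫ t in Iic c, g t) - ∫ t in Iic c, t * g t ≤
      s * (∫ t in Iic s, g t) - ∫ t in Iic s, t * g t := by
  have hh : Integrable fun t => (s - t) * g t :=
    ((hg.const_mul s).sub htg).congr (.of_forall fun t => by simp [sub_mul])
  have hF : ∀ a, s * (∫ t in Iic a, g t) - ∫ t in Iic a, t * g t = ∫ t in Iic a, (s - t) * g t :=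
    fun a => by
      rw [← integral_const_mul, ← integral_sub (hg.const_mul s).integrableOn htg.integrableOn]
      simp_rw [sub_mul]
  rw [hF, hF, ← sub_nonneg, intervalIntegral.integral_Iic_sub_Iic hh.integrableOn hh.integrableOn]
  rcases le_total c s with hcs | hsc
  · exact intervalIntegral.integral_nonneg hcs fun t ht =>
      mul_nonneg (sub_nonneg.mpr ht.2) (hg0 t)
  · rw [intervalIntegral.integral_symm, ← intervalIntegral.integral_neg]
    exact intervalIntegral.integral_nonneg hsc fun t ht => by
      nlinarith [hg0 t, ht.1]

namespace Game

variable {N : ℕ} {Xs : Fin N → Type} [∀ j, Fintype (Xs j)] [∀ j, Nonempty (Xs j)]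
variable (Γ : Game N Xs)

theorem p_pos (i : GrpI) (x : (j : Fin N) → Xs j) (y : Cls) : 0 < Γ.p i x y :=
  mul_pos (Γ.pY_pos _ _) (Γ.pC_pos _ _)

theorem G_nonneg (c : ℝ) : 0 ≤ Γ.G c :=
  setIntegral_nonneg measurableSet_Iic fun t _ => (Γ.g_pos t).le

theorem G_le_one (c : ℝ) : Γ.G c ≤ 1 :=
  Γ.g_norm ▸ setIntegral_le_integral Γ.g_int (.of_forall fun t => (Γ.g_pos t).le)

/-- `Pr(accepted | i, q) - Pr(accepted | i, u)` under the within-group policy `di`. -/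
def acceptGap (i : GrpI) (di : ((j : Fin N) → Xs j) → ℝ) : ℝ :=
  ∑ x, (Γ.p i x Cls.q - Γ.p i x Cls.u) * di x

theorem Uapp_eq (i : GrpI) (ci : ℝ) (di : ((j : Fin N) → Xs j) → ℝ) :
    Γ.Uapp i ci di = Γ.om * ∑ x, Γ.p i x Cls.u * di x +
      (Γ.om * Γ.acceptGap i di * Γ.G ci - ∫ t in Iic ci, t * Γ.g t) := by
  have hsum : ∑ x, (Γ.G ci * Γ.p i x Cls.q + (1 - Γ.G ci) * Γ.p i x Cls.u) * di x =
      ∑ x, Γ.p i x Cls.u * di x + Γ.G ci * Γ.acceptGap i di := by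
    rw [acceptGap, mul_sum, ← sum_add_distrib]
    exact sum_congr rfl fun x _ => by ring
  rw [Uapp, hsum]
  ring

theorem Uapp_le_Uapp_om_mul_acceptGap (i : GrpI) (di : ((j : Fin N) → Xs j) → ℝ) (c : ℝ) :
    Γ.Uapp i c di ≤ Γ.Uapp i (Γ.om * Γ.acceptGap i di) di := by
  have htg : Integrable fun t => t * Γ.g t :=
    Γ.g_abs_int.mono' (aestronglyMeasurable_id.mul Γ.g_int.aestronglyMeasurable)
      (.of_forall fun t => by rw [norm_mul, Real.norm_eq_abs, Real.norm_of_nonneg (Γ.g_pos t).le])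
  rw [Uapp_eq, Uapp_eq]
  have := mul_setIntegral_Iic_sub_setIntegral_Iic_le (fun t => (Γ.g_pos t).le) Γ.g_int htg
    (Γ.om * Γ.acceptGap i di) c
  simp only [G, mul_assoc] at this ⊢
  linarith

theorem bestResponds_of_eq_om_mul_acceptGap {c : GrpI → ℝ} {d : GrpI → ((j : Fin N) → Xs j) → ℝ}
    (hc : ∀ i, c i = Γ.om * Γ.acceptGap i (d i)) : Γ.BestResponds c d := fun i c' =>
  hc i ▸ Γ.Uapp_le_Uapp_om_mul_acceptGap i (d i) c'

def netGain (c : GrpI → ℝ) (x : (j : Fin N) → Xs j) : ℝ :=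
  ∑ i, Γ.lam i * (Γ.G (c i) * Γ.p i x Cls.q * Γ.vq - (1 - Γ.G (c i)) * Γ.p i x Cls.u * Γ.vu)

-- `f_RE` is calibrated: `μ_RE · f_RE = λ_i G(c̄ i) p(x | i, q)`.
theorem muRE_mul_payoff (c : GrpI → ℝ) (i : GrpI) (x : (j : Fin N) → Xs j) :
    Γ.muRE c i x * (Γ.fRE c i x * Γ.vq - (1 - Γ.fRE c i x) * Γ.vu) =
      Γ.lam i * (Γ.G (c i) * Γ.p i x Cls.q * Γ.vq - (1 - Γ.G (c i)) * Γ.p i x Cls.u * Γ.vu) := by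
  have hq := Γ.p_pos i x Cls.q
  have hu := Γ.p_pos i x Cls.u
  have hG0 := Γ.G_nonneg (c i)
  have hG1 := Γ.G_le_one (c i)
  have hden : 0 < Γ.G (c i) * Γ.p i x Cls.q + (1 - Γ.G (c i)) * Γ.p i x Cls.u := by
    rcases hG0.eq_or_lt with hG | hG
    · simpa [← hG] using hu
    · nlinarith [mul_pos hG hq, mul_nonneg (sub_nonneg.2 hG1) hu.le]
  unfold muRE fRE
  field_simp
  ring

theorem UF_eq_sum_netGain (c : GrpI → ℝ) {d : GrpI → ((j : Fin N) → Xs j) → ℝ}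
    (hd : ∀ x, d GrpI.w x = d GrpI.b x) :
    Γ.UF d (Γ.muRE c) (Γ.fRE c) = ∑ x, d GrpI.w x * Γ.netGain c x := by
  rw [UF, sum_comm]
  refine sum_congr rfl fun x _ => ?_
  have hdi : ∀ i, d i x = d GrpI.w x := by rintro (_ | _) <;> simp [hd]
  simp only [netGain, mul_sum, mul_assoc, muRE_mul_payoff, hdi]

theorem UF_le_UF_ite (c : GrpI → ℝ) (P : ((j : Fin N) → Xs j) → Prop) [DecidablePred P]
    (hpos : ∀ x, P x → 0 ≤ Γ.netGain c x) (hneg : ∀ x, ¬P x → Γ.netGain c x ≤ 0)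
    {d : GrpI → ((j : Fin N) → Xs j) → ℝ} (hd : d ∈ CBset) :
    Γ.UF d (Γ.muRE c) (Γ.fRE c) ≤
      Γ.UF (fun _ x => if P x then 1 else 0) (Γ.muRE c) (Γ.fRE c) := by
  rw [Γ.UF_eq_sum_netGain c hd.2, Γ.UF_eq_sum_netGain c fun _ => rfl]
  refine sum_le_sum fun x _ => ?_
  obtain ⟨h0, h1⟩ := hd.1 GrpI.w x
  by_cases hP : P x
  · simpa [hP] using mul_le_mul_of_nonneg_right h1 (hpos x hP)
  · simpa [hP] using mul_nonpos_of_nonneg_of_nonpos h0 (hneg x hP)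

end Game

theorem sum_fin_two_arrow {α M : Type*} [Fintype α] [AddCommMonoid M] (F : (Fin 2 → α) → M) :
    ∑ x, F x = ∑ a, ∑ b, F ![a, b] := by
  rw [← (finTwoArrowEquiv α).symm.sum_comp, Fintype.sum_prod_type]
  rfl

theorem sum_grpI {M : Type*} [AddCommMonoid M] (F : GrpI → M) :
    ∑ i, F i = F GrpI.w + F GrpI.b := by
  rw [show (univ : Finset GrpI) = {GrpI.w, GrpI.b} from rfl, sum_pair (by decide)]

namespace ProxyExample

/-- `p(x₀ | y)`: the informative feature is `x₀`, i.e. `𝒴 = {0}`. -/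
def signalLikelihood : Bool → Cls → ℝ
  | true, Cls.q => 2 / 3
  | true, Cls.u => 1 / 3
  | false, Cls.q => 1 / 3
  | false, Cls.u => 2 / 3

/-- `p(x₁ = true | i, x₀)` for the proxy `x₁`. -/
def proxyProb : GrpI → Bool → ℝ
  | GrpI.w, true => 9 / 10
  | GrpI.w, false => 4 / 5
  | GrpI.b, _ => 1 / 10

theorem proxyProb_mem_Ioo (i : GrpI) (a : Bool) : proxyProb i a ∈ Set.Ioo 0 1 := by
  cases i <;> cases a <;> norm_num [proxyProb]

theorem restrict_zero_eq_iff (x : Fin 2 → Bool) (xY : ({0} : Finset (Fin 2)) → Bool) :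
    (fun j : ({0} : Finset (Fin 2)) => x j.1) = xY ↔ x 0 = xY default :=
  ⟨fun h => h ▸ rfl, fun h => funext fun j => by rw [Subsingleton.elim j default]; exact h⟩

def game : Game 2 (fun _ => Bool) where
  lamw := 1 / 2
  lamw_pos := by norm_num
  lamw_lt_one := by norm_num
  Ysub := {0}
  Ysub_nonempty := singleton_nonempty 0
  pY xY y := signalLikelihood (xY default) y
  pC i x := if x 1 then proxyProb i (x 0) else 1 - proxyProb i (x 0)
  pY_pos xY y := by cases xY default <;> cases y <;> norm_num [signalLikelihood]
  pC_pos i x := by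
    have := proxyProb_mem_Ioo i (x 0)
    split_ifs
    exacts [this.1, sub_pos.mpr this.2]
  pY_sum y := by
    rw [← (Equiv.funUnique _ Bool).symm.sum_comp]
    cases y <;> norm_num [signalLikelihood]
  pC_sum i xY := by
    rw [sum_filter, sum_fin_two_arrow]
    simp [restrict_zero_eq_iff]
  -- centred at `1` so that the black threshold `0` has `G 0 = exp (-1) / 2 < 1 / 4`
  g := laplacePDF 1
  g_pos := laplacePDF_pos 1
  g_int := integrable_laplacePDF 1
  g_norm := integral_laplacePDF 1
  g_abs_int := integrable_abs_mul_laplacePDF 1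
  vq := 1
  vu := 1
  om := 300
  vq_pos := one_pos
  vu_pos := one_pos
  om_pos := by norm_num

def thresholds : GrpI → ℝ
  | GrpI.w => 10
  | GrpI.b => 0

def policy : GrpI → (Fin 2 → Bool) → ℝ := fun _ x => if x 1 then 1 else 0

theorem policy_mem_CBset : policy ∈ CBset :=
  ⟨fun _ x => by unfold policy; split_ifs <;> norm_num, fun _ => rfl⟩

theorem game_p (i : GrpI) (x : Fin 2 → Bool) (y : Cls) :
    game.p i x y = signalLikelihood (x 0) y *
      (if x 1 then proxyProb i (x 0) else 1 - proxyProb i (x 0)) := rfl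

theorem game_om : game.om = 300 := rfl

theorem one_not_lv : game.OneNotLV := by
  rintro ⟨x, hx⟩
  change signalLikelihood (x 0) Cls.q / signalLikelihood (x 0) Cls.u = 1 at hx
  generalize x 0 = a at hx
  cases a <;> norm_num [signalLikelihood] at hx

theorem thresholds_eq (i : GrpI) : thresholds i = game.om * game.acceptGap i (policy i) := by
  cases i <;> norm_num [Game.acceptGap, sum_fin_two_arrow, game_p, policy, signalLikelihood,
    proxyProb, thresholds, game_om]

theorem G_thresholds_w : 3 / 4 ≤ game.G (thresholds GrpI.w) := by
  have h := setIntegral_Iic_laplacePDF_of_le (m := 1) (c := 10) (by norm_num)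
  have : exp (-9) < 1 / 2 := (exp_lt_exp.mpr (by norm_num)).trans exp_neg_one_lt_half
  change 3 / 4 ≤ ∫ t in Iic 10, laplacePDF 1 t
  norm_num at h
  linarith

theorem G_thresholds_b : game.G (thresholds GrpI.b) ≤ 1 / 4 := by
  have h := setIntegral_Iic_laplacePDF (m := 1) (c := 0) (by norm_num)
  change ∫ t in Iic 0, laplacePDF 1 t ≤ 1 / 4
  norm_num at h
  linarith [exp_neg_one_lt_half]

theorem netGain_thresholds_nonneg (x : Fin 2 → Bool) (hx : x 1 = true) :
    0 ≤ game.netGain thresholds x := by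
  have hw := G_thresholds_w
  have hb := game.G_nonneg (thresholds GrpI.b)
  simp only [Game.netGain, sum_grpI, game_p, hx]
  generalize game.G (thresholds GrpI.w) = Gw at hw
  generalize game.G (thresholds GrpI.b) = Gb at hb
  generalize x 0 = a
  cases a <;> norm_num [game, Game.lam, signalLikelihood, proxyProb] <;> linarith

theorem netGain_thresholds_nonpos (x : Fin 2 → Bool) (hx : x 1 = false) :
    game.netGain thresholds x ≤ 0 := by
  have hw := game.G_le_one (thresholds GrpI.w)
  have hb := G_thresholds_b
  simp only [Game.netGain, sum_grpI, game_p, hx]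
  generalize game.G (thresholds GrpI.w) = Gw at hw
  generalize game.G (thresholds GrpI.b) = Gb at hb
  generalize x 0 = a
  cases a <;> norm_num [game, Game.lam, signalLikelihood, proxyProb] <;> linarith

end ProxyExample

/-- **Proposition.** The color-blind control is not ideal: there exists a game
and a color-blind-controlled equilibrium of that game which is not a
non-discriminatory equilibrium, so property (2) of an ideal control fails. -/
theorem color_blind_control_not_ideal :
    ∃ (N : ℕ) (Xs : Fin N → Type) (_ : ∀ j, Fintype (Xs j))
      (_ : ∀ j, Nonempty (Xs j)) (Γ : Game N Xs)
      (c : GrpI → ℝ) (d : GrpI → ((j : Fin N) → Xs j) → ℝ),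
      Γ.OneNotLV ∧
      Γ.IsControlledEq (fun _ _ => CBset) c d ∧
      ¬(Γ.IsEquilibrium c d ∧ c GrpI.w = c GrpI.b) := by
  open ProxyExample in
  refine ⟨2, fun _ => Bool, inferInstance, inferInstance, game, thresholds, policy, one_not_lv,
    ⟨policy_mem_CBset, game.bestResponds_of_eq_om_mul_acceptGap thresholds_eq, ?_⟩, ?_⟩
  · exact fun d' hd' => game.UF_le_UF_ite thresholds (fun x => x 1 = true)
      netGain_thresholds_nonneg (fun x hx => netGain_thresholds_nonpos x (by simpa using hx)) hd'
  · rintro ⟨-, hc⟩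
    norm_num [thresholds] at hc
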